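/- There exists an absolute constant C > 0 such that for every q ≥ 3, every real non-principal Dirichlet character χ mod q, and every real number β with 1 − 1/log q < β < 1 and L(β,χ) = 0, one has L(1,χ) ≤ C·(1 − β)·(log q)^2. -/

import Mathlib

open DirichletCharacter

open Finset DirichletCharacter
lemma sum_range_zmod {q : ℕ} [NeZero q] (f : ZMod q → ℂ) :
    ∑ k ∈ range q, f (k : ZMod q) = ∑ x : ZMod q, f x := by
  refine sum_bij' (fun k _ => (k : ZMod q)) (fun x _ => x.val) ?_ ?_ ?_ ?_ ?_ <;>
    simp +contextual [ZMod.val_lt, ZMod.natCast_val, ZMod.val_natCast_of_lt, Nat.mod_eq_of_lt]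

lemma period_sum_zero {q : ℕ} [NeZero q] {χ : DirichletCharacter ℂ q} (hχ : χ ≠ 1) (j : ℕ) :
    ∑ k ∈ range q, χ ((j + k : ℕ) : ZMod q) = 0 := by
  have : ∀ k : ℕ, ((j + k : ℕ) : ZMod q) = (j : ZMod q) + (k : ZMod q) := by push_cast; simp
  simp_rw [this]
  rw [sum_range_zmod (fun x => χ ((j : ZMod q) + x))]
  rw [← χ.sum_eq_zero_of_ne_one hχ]
  exact Fintype.sum_equiv (Equiv.addLeft (j : ZMod q)) _ _ (fun x => rfl)

lemma partial_sum_bound {q : ℕ} [NeZero q] {χ : DirichletCharacter ℂ q} (hχ : χ ≠ 1) (n : ℕ) :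
    ‖∑ k ∈ range (n + 1), χ (k : ZMod q)‖ ≤ q := by
  induction n using Nat.strong_induction_on with
  | _ n ih =>
    rcases lt_or_ge n q with h | h
    · calc ‖∑ k ∈ range (n + 1), χ (k : ZMod q)‖ ≤ ∑ k ∈ range (n + 1), ‖χ (k : ZMod q)‖ :=
            norm_sum_le _ _
        _ ≤ ∑ _k ∈ range (n + 1), 1 := sum_le_sum fun k _ => χ.norm_le_one _
        _ = n + 1 := by simp
        _ ≤ q := by exact_mod_cast h
    · have hq : 0 < q := NeZero.pos q
      have hsplit : ∑ k ∈ range (n + 1), χ (k : ZMod q) =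
          ∑ k ∈ range (n - q + 1), χ (k : ZMod q) + ∑ k ∈ Ico (n - q + 1) (n + 1), χ (k : ZMod q) := by
        rw [range_eq_Ico, ← sum_Ico_consecutive _ (by omega : 0 ≤ n - q + 1) (by omega : n - q + 1 ≤ n + 1), ← range_eq_Ico]
      have hIco : ∑ k ∈ Ico (n - q + 1) (n + 1), χ (k : ZMod q) = 0 := by
        rw [sum_Ico_eq_sum_range]
        have : n + 1 - (n - q + 1) = q := by omega
        rw [this]
        exact period_sum_zero hχ _
      rw [hsplit, hIco, add_zero]
      exact ih (n - q) (by omega)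
open Finset Complex

lemma hasDerivAt_cpow_negs {s : ℂ} (hs : s ≠ 0) {x : ℝ} (hx : 0 < x) :
    HasDerivAt (fun t : ℝ => (t : ℂ) ^ (-s)) (-s * (x : ℂ) ^ (-s - 1)) x := by
  have h := hasDerivAt_ofReal_cpow_const' (ne_of_gt hx) (r := -s - 1) (by
    intro h; apply hs; have := congrArg (· + 1) h; simpa using this)
  have h2 := h.const_mul (-s)
  have he : (fun y : ℝ => -s * ((y : ℂ) ^ (-s - 1 + 1) / (-s - 1 + 1))) =
      fun t : ℝ => (t : ℂ) ^ (-s) := by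
    funext y
    have : -s - 1 + 1 = -s := by ring
    rw [this]
    field_simp
  rw [he] at h2
  exact h2

lemma cpow_diff_bound {s : ℂ} (hs : 0 < s.re) {n : ℕ} (hn : 1 ≤ n) :
    ‖(n : ℂ) ^ (-s) - ((n : ℂ) + 1) ^ (-s)‖ ≤ ‖s‖ * (n : ℝ) ^ (-s.re - 1) := by
  have hs0 : s ≠ 0 := fun h => by simp [h] at hs
  have hnpos : (0:ℝ) < n := by exact_mod_cast hn
  have key := norm_image_sub_le_of_norm_deriv_le_segment'
    (f := fun t : ℝ => (t : ℂ) ^ (-s)) (f' := fun t : ℝ => -s * (t : ℂ) ^ (-s - 1))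
    (a := (n:ℝ)) (b := (n:ℝ) + 1) (C := ‖s‖ * (n : ℝ) ^ (-s.re - 1))
    (fun x hx => (hasDerivAt_cpow_negs hs0 (lt_of_lt_of_le hnpos hx.1)).hasDerivWithinAt)
    (fun x hx => by
      have hxpos : (0:ℝ) < x := lt_of_lt_of_le hnpos hx.1
      rw [norm_mul, norm_neg]
      have : ‖(x : ℂ) ^ (-s - 1)‖ = x ^ (-s.re - 1) := by
        rw [Complex.norm_cpow_eq_rpow_re_of_pos hxpos]
        norm_num
      rw [this]
      exact mul_le_mul_of_nonneg_left
        (Real.rpow_le_rpow_of_nonpos hnpos hx.1 (by linarith)) (norm_nonneg s))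
    ((n:ℝ) + 1) (by constructor <;> norm_num)
  rw [norm_sub_rev]
  have : ((((n:ℝ) + 1) : ℝ) : ℂ) = (n : ℂ) + 1 := by push_cast; ring
  calc ‖((n:ℂ) + 1) ^ (-s) - (n:ℂ) ^ (-s)‖
      = ‖((((n:ℝ) + 1) : ℝ) : ℂ) ^ (-s) - (((n:ℝ) : ℝ) : ℂ) ^ (-s)‖ := by norm_cast
    _ ≤ ‖s‖ * (n : ℝ) ^ (-s.re - 1) * ((n:ℝ) + 1 - n) := key
    _ = ‖s‖ * (n : ℝ) ^ (-s.re - 1) := by ring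

lemma tail_sum_le {σ : ℝ} (hσ : 0 < σ) {q : ℕ} (hq : 1 ≤ q) :
    ∑' m : ℕ, ((q : ℝ) + 1 + m) ^ (-σ - 1) ≤ (q : ℝ) ^ (-σ) / σ := by
  set a : ℕ → ℝ := fun m => ((q : ℝ) + m) ^ (-σ) with ha
  set b : ℕ → ℝ := fun m => ((q : ℝ) + 1 + m) ^ (-σ - 1) with hb
  have hqpos : (0:ℝ) < q := by exact_mod_cast hq
  have hbnn : ∀ m, 0 ≤ b m := fun m => Real.rpow_nonneg (by positivity) _
  have hkey : ∀ m : ℕ, σ * b m ≤ a m - a (m + 1) := by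
    intro m
    have hc : (0:ℝ) < (q:ℝ) + m := by positivity
    obtain ⟨x, hx, hxe⟩ := exists_hasDerivAt_eq_slope (fun t => t ^ (-σ))
      (fun t => -σ * t ^ (-σ - 1)) (by linarith : (q:ℝ) + m < (q:ℝ) + m + 1)
      (by
        apply ContinuousOn.rpow_const continuousOn_id
        intro x hx; left; simp only [id_eq]; intro h; rw [h] at hx
        exact absurd hx.1 (by linarith))
      (fun x hx => by
        have : (0:ℝ) < x := lt_trans hc hx.1
        simpa [mul_comm] using Real.hasDerivAt_rpow_const (p := -σ) (Or.inl (ne_of_gt this)))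
    have hxpos : (0:ℝ) < x := lt_trans hc hx.1
    have hstep : a m - a (m + 1) = σ * x ^ (-σ - 1) := by
      have hsl : -σ * x ^ (-σ - 1) = (((q:ℝ) + m + 1) ^ (-σ) - ((q:ℝ) + m) ^ (-σ)) / 1 := by
        rw [hxe]; norm_num
    
      have : a (m+1) = ((q:ℝ) + m + 1) ^ (-σ) := by simp [ha]; ring_nf
      rw [this, ha]
      simp only []
      nlinarith [hsl]
    rw [hstep]
    have hble : ((q:ℝ) + 1 + m) ^ (-σ - 1) ≤ x ^ (-σ - 1) := by
      apply Real.rpow_le_rpow_of_nonpos hxpos (by linarith [hx.2]) (by linarith)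
    have : b m = ((q:ℝ) + 1 + m) ^ (-σ - 1) := rfl
    nlinarith
  have hann : ∀ m, 0 ≤ a m - a (m + 1) := fun m => le_trans (by positivity) (hkey m)
  have htend : Filter.Tendsto a Filter.atTop (nhds 0) := by
    have h1 : Filter.Tendsto (fun m : ℕ => (q:ℝ) + m) Filter.atTop Filter.atTop :=
      Filter.tendsto_atTop_add_const_left _ _ tendsto_natCast_atTop_atTop
    exact (tendsto_rpow_neg_atTop hσ).comp h1
  have hsum : HasSum (fun m => a m - a (m + 1)) (a 0) := by
    rw [hasSum_iff_tendsto_nat_of_nonneg hann]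
    have : ∀ n, ∑ i ∈ range n, (a i - a (i + 1)) = a 0 - a n := fun n => Finset.sum_range_sub' a n
    simp_rw [this]
    simpa using (tendsto_const_nhds (x := a 0)).sub htend
  have hsummb : Summable fun m => σ * b m :=
    Summable.of_nonneg_of_le (fun m => by positivity) hkey hsum.summable
  have hsb : Summable b := by
    have := hsummb.mul_left σ⁻¹
    simpa [inv_mul_cancel_left₀ (ne_of_gt hσ)] using this
  have : σ * ∑' m, b m ≤ a 0 := by
    rw [← tsum_mul_left]
    exact le_trans (Summable.tsum_le_tsum hkey hsummb hsum.summable) hsum.tsum_eq.le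
  have ha0 : a 0 = (q:ℝ) ^ (-σ) := by simp [ha]
  rw [le_div_iff₀ hσ]
  nlinarith [this]
open Finset Complex DirichletCharacter

noncomputable def SS {q : ℕ} (χ : DirichletCharacter ℂ q) (n : ℕ) : ℂ :=
  ∑ k ∈ Finset.range (n + 1), χ (k : ZMod q)

noncomputable def TT {q : ℕ} (χ : DirichletCharacter ℂ q) (s : ℂ) (n : ℕ) : ℂ :=
  SS χ n * ((n : ℂ) ^ (-s) - ((n : ℂ) + 1) ^ (-s))

noncomputable def FF {q : ℕ} (χ : DirichletCharacter ℂ q) (s : ℂ) : ℂ := ∑' n, TT χ s n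

variable {q : ℕ} [NeZero q] {χ : DirichletCharacter ℂ q}

lemma chi_zero_eq (hq : 3 ≤ q) : χ (0 : ZMod q) = 0 := by
  apply χ.map_nonunit
  intro h
  have := ZMod.isUnit_iff_coprime 0 q |>.mp (by simpa using h)
  simp [Nat.coprime_zero_left] at this
  omega

lemma SS_zero (hq : 3 ≤ q) : SS χ 0 = 0 := by
  simp [SS, chi_zero_eq hq]

lemma SS_succ (n : ℕ) : SS χ (n + 1) = SS χ n + χ ((n + 1 : ℕ) : ZMod q) := by
  simp [SS, Finset.sum_range_succ]

/-- Abel summation identity. -/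
lemma abel_identity (hq : 3 ≤ q) (s : ℂ) (N : ℕ) :
    ∑ k ∈ range (N + 1), χ (k : ZMod q) * (k : ℂ) ^ (-s) =
      ∑ n ∈ range N, TT χ s n + SS χ N * (N : ℂ) ^ (-s) := by
  induction N with
  | zero => simp [SS_zero hq, chi_zero_eq hq]
  | succ M ih =>
    rw [Finset.sum_range_succ, ih, Finset.sum_range_succ, SS_succ, TT]
    push_cast
    ring
section
open Finset Complex DirichletCharacter
variable {q : ℕ} [NeZero q] {χ : DirichletCharacter ℂ q}

lemma SS_bound_q (hχ : χ ≠ 1) (n : ℕ) : ‖SS χ n‖ ≤ q := partial_sum_bound hχ n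

lemma SS_bound_n (hq : 3 ≤ q) (n : ℕ) : ‖SS χ n‖ ≤ n := by
  rw [SS, Finset.sum_range_succ']
  simp only [Nat.cast_zero, chi_zero_eq hq, add_zero]
  calc ‖∑ k ∈ range n, χ ((k + 1 : ℕ) : ZMod q)‖ ≤ ∑ k ∈ range n, ‖χ ((k + 1 : ℕ) : ZMod q)‖ :=
        norm_sum_le _ _
    _ ≤ ∑ _k ∈ range n, 1 := sum_le_sum fun k _ => χ.norm_le_one _
    _ = n := by simp

lemma TT_zero (s : ℂ) (hq : 3 ≤ q) : TT χ s 0 = 0 := by simp [TT, SS_zero hq]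

lemma TT_bound_q (hχ : χ ≠ 1) {s : ℂ} (hs : 0 < s.re) {n : ℕ} (hn : 1 ≤ n) :
    ‖TT χ s n‖ ≤ q * ‖s‖ * (n : ℝ) ^ (-s.re - 1) := by
  rw [TT, norm_mul, mul_assoc]
  exact mul_le_mul (SS_bound_q hχ n) (cpow_diff_bound hs hn)
    (norm_nonneg _) (Nat.cast_nonneg q)

lemma TT_bound_n (hq : 3 ≤ q) {s : ℂ} (hs : 0 < s.re) {n : ℕ} (hn : 1 ≤ n) :
    ‖TT χ s n‖ ≤ n * ‖s‖ * (n : ℝ) ^ (-s.re - 1) := by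
  rw [TT, norm_mul, mul_assoc]
  exact mul_le_mul (SS_bound_n hq n) (cpow_diff_bound hs hn)
    (norm_nonneg _) (Nat.cast_nonneg n)

lemma summable_norm_TT (hq : 3 ≤ q) (hχ : χ ≠ 1) {s : ℂ} (hs : 0 < s.re) :
    Summable fun n => ‖TT χ s n‖ := by
  have hsumg : Summable (fun n : ℕ => (q : ℝ) * ‖s‖ * (n : ℝ) ^ (-s.re - 1)) := by
    apply Summable.mul_left
    exact Real.summable_nat_rpow.mpr (by linarith)
  refine Summable.of_nonneg_of_le (fun n => norm_nonneg _) (fun n => ?_) hsumg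
  rcases Nat.eq_zero_or_pos n with rfl | hn
  · simp [TT_zero s hq, Real.zero_rpow (by linarith : -s.re - 1 ≠ 0)]
  · exact TT_bound_q hχ hs hn

lemma summable_TT (hq : 3 ≤ q) (hχ : χ ≠ 1) {s : ℂ} (hs : 0 < s.re) :
    Summable fun n => TT χ s n :=
  (summable_norm_TT hq hχ hs).of_norm

lemma boundary_tendsto_zero (hχ : χ ≠ 1) {s : ℂ} (hs : 0 < s.re) :
    Filter.Tendsto (fun N : ℕ => SS χ N * (N : ℂ) ^ (-s)) Filter.atTop (nhds 0) := by
  have hg : Filter.Tendsto (fun N : ℕ => (q : ℝ) * (N : ℝ) ^ (-s.re)) Filter.atTop (nhds 0) := by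
    have h1 : Filter.Tendsto (fun N : ℕ => (N : ℝ)) Filter.atTop Filter.atTop :=
      tendsto_natCast_atTop_atTop
    simpa using (((tendsto_rpow_neg_atTop hs).comp h1).const_mul (q : ℝ))
  refine squeeze_zero_norm' ?_ hg
  · filter_upwards [Filter.eventually_ge_atTop 1] with N hN
    have hNpos : (0:ℝ) < N := by exact_mod_cast hN
    rw [norm_mul]
    have : ‖(N : ℂ) ^ (-s)‖ = (N : ℝ) ^ (-s.re) := by
      rw [norm_natCast_cpow_of_pos hN]
      norm_num
    rw [this]
    exact mul_le_mul_of_nonneg_right (SS_bound_q hχ N) (Real.rpow_nonneg hNpos.le _)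

/-- On `re s > 1`, `FF` agrees with the `LSeries`, hence with `LFunction`. -/
lemma LFunction_eq_FF_of_one_lt (hq : 3 ≤ q) (hχ : χ ≠ 1) {s : ℂ} (hs : 1 < s.re) :
    LFunction χ s = FF χ s := by
  rw [LFunction_eq_LSeries χ hs]
  have hsum : HasSum (fun k => LSeries.term (χ ·) s k) (LSeries (χ ·) s) :=
    (LSeriesSummable_of_one_lt_re χ hs).hasSum
  have hterm : ∀ k : ℕ, LSeries.term (χ ·) s k = χ (k : ZMod q) * (k : ℂ) ^ (-s) := by
    intro k
    rcases Nat.eq_zero_or_pos k with rfl | hk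
    · simp [LSeries.term, chi_zero_eq hq]
    · rw [LSeries.term_of_ne_zero (by omega)]
      rw [Complex.cpow_neg, div_eq_mul_inv]
  have h1 : Filter.Tendsto (fun N : ℕ => ∑ k ∈ range (N + 1), LSeries.term (χ ·) s k)
      Filter.atTop (nhds (LSeries (χ ·) s)) :=
    hsum.tendsto_sum_nat.comp (Filter.tendsto_add_atTop_nat 1)
  have h2 : Filter.Tendsto (fun N : ℕ => ∑ n ∈ range N, TT χ s n + SS χ N * (N : ℂ) ^ (-s))
      Filter.atTop (nhds (FF χ s + 0)) :=
    ((summable_TT hq hχ (by linarith)).hasSum.tendsto_sum_nat).add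
      (boundary_tendsto_zero hχ (by linarith))
  rw [add_zero] at h2
  apply tendsto_nhds_unique h1
  convert h2 using 2 with N
  simp_rw [hterm]
  exact abel_identity hq s N
end
section
open Finset Complex DirichletCharacter Filter
variable {q : ℕ} [NeZero q] {χ : DirichletCharacter ℂ q}

lemma partial_sum_differentiable (hq : 3 ≤ q) (N : ℕ) :
    Differentiable ℂ (fun s => ∑ n ∈ range N, TT χ s n) := by
  apply Differentiable.fun_sum
  intro n _
  rcases Nat.eq_zero_or_pos n with rfl | hn
  · have : (fun s => TT χ s 0) = fun _ => (0 : ℂ) := by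
      funext s; exact TT_zero s hq
    rw [this]; exact differentiable_const 0
  · have hn0 : (n : ℂ) ≠ 0 := Nat.cast_ne_zero.mpr (by omega)
    have hn1 : ((n : ℂ) + 1) ≠ 0 := by
      intro h
      have : ((n + 1 : ℕ) : ℂ) = 0 := by push_cast; linear_combination h
      exact (Nat.cast_ne_zero.mpr (by omega)) this
    apply Differentiable.const_mul
    exact (differentiable_neg.const_cpow (Or.inl hn0)).sub
      (differentiable_neg.const_cpow (Or.inl hn1))

lemma FF_tlu (hq : 3 ≤ q) (hχ : χ ≠ 1) :
    TendstoLocallyUniformlyOn (fun N s => ∑ n ∈ range N, TT χ s n) (FF χ) atTop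
      {s : ℂ | 0 < s.re} := by
  have hopen : IsOpen {s : ℂ | 0 < s.re} := isOpen_lt continuous_const continuous_re
  rw [tendstoLocallyUniformlyOn_iff_forall_isCompact hopen]
  intro K hK hKc
  rcases K.eq_empty_or_nonempty with rfl | hne
  · simp [tendstoUniformlyOn_empty]
  obtain ⟨z₀, hz₀K, hz₀min'⟩ := hKc.exists_isMinOn hne continuous_re.continuousOn
  obtain ⟨w, hwK, hwmax'⟩ := hKc.exists_isMaxOn hne continuous_norm.continuousOn
  have hz₀min : ∀ x ∈ K, z₀.re ≤ x.re := fun x hx => hz₀min' hx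
  have hwmax : ∀ x ∈ K, ‖x‖ ≤ ‖w‖ := fun x hx => hwmax' hx
  set δ := z₀.re with hδ
  have hδpos : 0 < δ := hK hz₀K
  apply tendstoUniformlyOn_tsum_nat
    (u := fun n : ℕ => (q : ℝ) * ‖w‖ * (n : ℝ) ^ (-δ - 1))
  · apply Summable.mul_left
    exact Real.summable_nat_rpow.mpr (by linarith)
  · intro n x hx
    rcases Nat.eq_zero_or_pos n with rfl | hn
    · simp [TT_zero _ hq, Real.zero_rpow (by linarith : -δ - 1 ≠ 0)]
    · have hxre : 0 < x.re := hK hx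
      calc ‖TT χ x n‖ ≤ q * ‖x‖ * (n : ℝ) ^ (-x.re - 1) := TT_bound_q hχ hxre hn
        _ ≤ q * ‖w‖ * (n : ℝ) ^ (-δ - 1) := by
            apply mul_le_mul
            · exact mul_le_mul_of_nonneg_left (hwmax x hx) (Nat.cast_nonneg q)
            · apply Real.rpow_le_rpow_of_exponent_le (by exact_mod_cast hn)
              have := hz₀min x hx
              simp only [hδ]; linarith
            · positivity
            · positivity

lemma FF_differentiableOn (hq : 3 ≤ q) (hχ : χ ≠ 1) :
    DifferentiableOn ℂ (FF χ) {s : ℂ | 0 < s.re} := by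
  have hopen : IsOpen {s : ℂ | 0 < s.re} := isOpen_lt continuous_const continuous_re
  exact (FF_tlu hq hχ).differentiableOn
    (Filter.Eventually.of_forall fun N =>
      ((partial_sum_differentiable hq N).differentiableOn)) hopen

/-- The key representation : `LFunction = FF` on the right half plane. -/
lemma LFunction_eq_FF (hq : 3 ≤ q) (hχ : χ ≠ 1) {s : ℂ} (hs : 0 < s.re) :
    LFunction χ s = FF χ s := by
  have hopen : IsOpen {s : ℂ | 0 < s.re} := isOpen_lt continuous_const continuous_re
  have hL : AnalyticOnNhd ℂ (LFunction χ) {s : ℂ | 0 < s.re} :=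
    ((differentiable_LFunction hχ).differentiableOn).analyticOnNhd hopen
  have hF : AnalyticOnNhd ℂ (FF χ) {s : ℂ | 0 < s.re} :=
    (FF_differentiableOn hq hχ).analyticOnNhd hopen
  have hpre : IsPreconnected {s : ℂ | 0 < s.re} :=
    (convex_halfSpace_re_gt (0 : ℝ)).isPreconnected
  have h2 : (2 : ℂ) ∈ {s : ℂ | 0 < s.re} := by norm_num
  have hev : LFunction χ =ᶠ[nhds (2 : ℂ)] FF χ := by
    have hopen1 : IsOpen {s : ℂ | 1 < s.re} := isOpen_lt continuous_const continuous_re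
    filter_upwards [hopen1.mem_nhds (by norm_num : (2:ℂ) ∈ {s : ℂ | 1 < s.re})] with z hz
    exact LFunction_eq_FF_of_one_lt hq hχ hz
  exact hL.eqOn_of_preconnected_of_eventuallyEq hF hpre h2 hev hs
end
section
open Finset Complex DirichletCharacter Filter
variable {q : ℕ} [NeZero q] {χ : DirichletCharacter ℂ q}

lemma rpow_one_sub_le {E : ℝ} (hE1 : 1 ≤ E) {σ : ℝ} {n : ℕ} (hn : 1 ≤ n) (hnq : n ≤ q)
    (hqE : (q : ℝ) ^ (1 - σ) ≤ E) : (n : ℝ) ^ (1 - σ) ≤ E := by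
  rcases le_or_gt σ 1 with h | h
  · refine le_trans (Real.rpow_le_rpow (Nat.cast_nonneg n) (by exact_mod_cast hnq) (by linarith)) hqE
  · exact le_trans (Real.rpow_le_one_of_one_le_of_nonpos (by exact_mod_cast hn) (by linarith)) hE1

set_option maxHeartbeats 1000000 in
lemma FF_bound (hq : 3 ≤ q) (hχ : χ ≠ 1) {s : ℂ} {E : ℝ} (hE1 : 1 ≤ E)
    (hσ : 0 < s.re) (hqE : (q : ℝ) ^ (1 - s.re) ≤ E) (hs2 : ‖s‖ ≤ 2) :
    ‖FF χ s‖ ≤ 2 * E * (1 + Real.log q) + 2 * E / s.re := by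
  have hq1 : 1 ≤ q := by omega
  have hsummable := summable_norm_TT hq hχ hσ
  have hsplit := Summable.sum_add_tsum_nat_add (q + 1) hsummable
  -- head bound
  have hhead : ∑ n ∈ range (q + 1), ‖TT χ s n‖ ≤ 2 * E * (1 + Real.log q) := by
    rw [Finset.sum_range_succ']
    have h0 : ‖TT χ s 0‖ = 0 := by rw [TT_zero s hq, norm_zero]
    rw [h0, add_zero]
    have hterm : ∀ i ∈ range q, ‖TT χ s (i + 1)‖ ≤ 2 * E * (1 / (i + 1 : ℝ)) := by
      intro i _hi
      have hi1 : 1 ≤ i + 1 := by omega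
      have hipos : (0:ℝ) < (i + 1 : ℕ) := by positivity
      have hiq : i + 1 ≤ q := by
        simp only [Finset.mem_range] at _hi; omega
      calc ‖TT χ s (i + 1)‖ ≤ (i + 1 : ℕ) * ‖s‖ * ((i + 1 : ℕ) : ℝ) ^ (-s.re - 1) :=
            TT_bound_n hq hσ hi1
        _ = ‖s‖ * ((i + 1 : ℕ) : ℝ) ^ (-s.re) := by
            rw [show ((i + 1 : ℕ) : ℝ) * ‖s‖ * ((i + 1 : ℕ) : ℝ) ^ (-s.re - 1)
                = ‖s‖ * (((i + 1 : ℕ) : ℝ) ^ (1:ℝ) * ((i + 1 : ℕ) : ℝ) ^ (-s.re - 1)) by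
              rw [Real.rpow_one]; ring]
            rw [← Real.rpow_add hipos]
            norm_num
        _ ≤ 2 * (((i + 1 : ℕ) : ℝ) ^ (1 - s.re) * ((i + 1 : ℕ) : ℝ) ^ (-(1:ℝ))) := by
            rw [← Real.rpow_add hipos]
            have : (1 : ℝ) - s.re + -1 = -s.re := by ring
            rw [this]
            exact mul_le_mul_of_nonneg_right hs2 (Real.rpow_nonneg hipos.le _)
        _ ≤ 2 * (E * ((i + 1 : ℕ) : ℝ) ^ (-(1:ℝ))) := by
            have := rpow_one_sub_le hE1 hi1 hiq hqE (σ := s.re)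
            have hnn : (0:ℝ) ≤ ((i + 1 : ℕ) : ℝ) ^ (-(1:ℝ)) := Real.rpow_nonneg hipos.le _
            nlinarith
        _ = 2 * E * (1 / (i + 1 : ℝ)) := by
            rw [Real.rpow_neg_one]
            push_cast
            ring
    calc ∑ i ∈ range q, ‖TT χ s (i + 1)‖ ≤ ∑ i ∈ range q, 2 * E * (1 / (i + 1 : ℝ)) :=
          Finset.sum_le_sum hterm
      _ = 2 * E * ∑ i ∈ range q, (1 / (i + 1 : ℝ)) := by rw [Finset.mul_sum]
      _ ≤ 2 * E * (1 + Real.log q) := by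
          have hh : ∑ i ∈ range q, (1 / (i + 1 : ℝ)) = (harmonic q : ℝ) := by
            rw [harmonic]
            push_cast
            simp [one_div]
          rw [hh]
          exact mul_le_mul_of_nonneg_left (harmonic_le_one_add_log q) (by linarith)
  -- tail bound
  have hsumtail : Summable (fun m : ℕ => ((q:ℝ) + 1 + m) ^ (-s.re - 1)) := by
    have h1 : Summable (fun m : ℕ => ((m:ℝ) + 1) ^ (-s.re - 1)) := by
      have h2 := (summable_nat_add_iff (f := fun m : ℕ => (m:ℝ) ^ (-s.re - 1)) 1).mpr
        (Real.summable_nat_rpow.mpr (by linarith))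
      simpa using h2
    refine Summable.of_nonneg_of_le (fun m => Real.rpow_nonneg (by positivity) _)
      (fun m => ?_) h1
    apply Real.rpow_le_rpow_of_nonpos (by positivity) ?_ (by linarith)
    have : (1:ℝ) ≤ q := by exact_mod_cast hq1
    linarith
  have htail : ∑' m : ℕ, ‖TT χ s (m + (q + 1))‖ ≤ 2 * E / s.re := by
    have hterm : ∀ m : ℕ, ‖TT χ s (m + (q + 1))‖ ≤ 2 * q * ((q:ℝ) + 1 + m) ^ (-s.re - 1) := by
      intro m
      have hcast : ((m + (q + 1) : ℕ) : ℝ) = (q:ℝ) + 1 + m := by push_cast; ring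
      calc ‖TT χ s (m + (q + 1))‖ ≤ q * ‖s‖ * ((m + (q + 1) : ℕ) : ℝ) ^ (-s.re - 1) :=
            TT_bound_q hχ hσ (by omega)
        _ ≤ 2 * q * ((q:ℝ) + 1 + m) ^ (-s.re - 1) := by
            rw [hcast]
            have hnn : (0:ℝ) ≤ ((q:ℝ) + 1 + m) ^ (-s.re - 1) := Real.rpow_nonneg (by positivity) _
            rw [show (2:ℝ) * q = (q:ℝ) * 2 by ring]
            exact mul_le_mul_of_nonneg_right
              (mul_le_mul_of_nonneg_left hs2 (Nat.cast_nonneg q)) hnn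
    calc ∑' m : ℕ, ‖TT χ s (m + (q + 1))‖
        ≤ ∑' m : ℕ, 2 * q * ((q:ℝ) + 1 + m) ^ (-s.re - 1) := by
          apply Summable.tsum_le_tsum hterm ((summable_nat_add_iff (q+1)).mpr hsummable)
          exact (hsumtail.mul_left _)
      _ = 2 * q * ∑' m : ℕ, ((q:ℝ) + 1 + m) ^ (-s.re - 1) := tsum_mul_left
      _ ≤ 2 * q * ((q:ℝ) ^ (-s.re) / s.re) := by
          apply mul_le_mul_of_nonneg_left (tail_sum_le hσ hq1) (by positivity)
      _ = 2 * ((q:ℝ) ^ (1 - s.re)) / s.re := by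
          have hqpos : (0:ℝ) < q := by exact_mod_cast hq1
          rw [show (1:ℝ) - s.re = 1 + -s.re by ring, Real.rpow_add hqpos, Real.rpow_one]
          ring
      _ ≤ 2 * E / s.re := by
          gcongr
  -- combine
  have h1 : ‖FF χ s‖ ≤ ∑' n, ‖TT χ s n‖ := norm_tsum_le_tsum_norm hsummable
  rw [← hsplit] at h1
  linarith
end

/-- If `χ` is a real non-principal Dirichlet character mod `q ≥ 3` and `β ∈ (1 - 1/log q, 1)`
is a real zero of `L(s,χ)`, then `L(1,χ) ≤ C·(1-β)·(log q)^2` for an absolute constant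
`C > 0`.  (For a real character, `L(1,χ)` is a real number, recorded here as the real part
of the complex value.) -/
theorem L_one_le_of_siegel_zero :
    ∃ C : ℝ, 0 < C ∧
      ∀ (q : ℕ) (_ : NeZero q) (χ : DirichletCharacter ℂ q) (β : ℝ),
        3 ≤ q → (∀ n : ZMod q, χ n ∈ ({-1, 0, 1} : Set ℂ)) → χ ≠ 1 →
        1 - 1 / Real.log q < β → β < 1 → χ.LFunction β = 0 →
        (χ.LFunction 1).re ≤ C * (1 - β) * Real.log q ^ 2 := by
  classical
  set a : ℝ := (Real.log 3 - 1) / 2 with ha_def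
  have hlog3 : 1 < Real.log 3 := by
    rw [show (1:ℝ) = Real.log (Real.exp 1) by rw [Real.log_exp]]
    exact Real.log_lt_log (Real.exp_pos 1) (lt_trans Real.exp_one_lt_d9 (by norm_num))
  have ha : 0 < a := by rw [ha_def]; linarith
  have ha1 : a < 1 := by
    have := Real.log_lt_sub_one_of_pos (by norm_num : (0:ℝ) < 3) (by norm_num)
    rw [ha_def]; linarith
  set E : ℝ := Real.exp (1 + a) with hE_def
  have hE1 : 1 ≤ E := Real.one_le_exp (by linarith)
  have hEpos : 0 < E := lt_of_lt_of_le one_pos hE1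
  set σ₀ : ℝ := 1 - (1 + a) / Real.log 3 with hσ₀_def
  have hσ₀ : 0 < σ₀ := by
    rw [hσ₀_def]
    have h1 : (1 + a) / Real.log 3 < 1 := by
      rw [div_lt_one (by linarith)]
      rw [ha_def]; linarith
    linarith
  set K₁ : ℝ := 4 * E + 2 * E / σ₀ with hK₁_def
  have hK₁ : 0 < K₁ := by positivity
  refine ⟨K₁ / a, by positivity, ?_⟩
  intro q inst χ β hq3 _hreal hχ hβ1 hβ2 hzero
  haveI := inst
  set L : ℝ := Real.log q with hL_def
  have hL3 : Real.log 3 ≤ L := Real.log_le_log (by norm_num) (by exact_mod_cast hq3)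
  have hL1 : 1 < L := lt_of_lt_of_le hlog3 hL3
  have hLpos : 0 < L := by linarith
  set r : ℝ := a / L with hr_def
  have hrpos : 0 < r := by positivity
  have hβpos : 0 < β := by
    have : 1 / L < 1 := by rw [div_lt_one hLpos]; linarith
    linarith
  -- the derivative bound
  have hderiv : ∀ σ : ℝ, β ≤ σ → σ ≤ 1 → ‖deriv (LFunction χ) σ‖ ≤ K₁ / a * L ^ 2 := by
    intro σ hσβ hσ1
    have hbound : ∀ z ∈ Metric.sphere (σ : ℂ) r, ‖LFunction χ z‖ ≤ K₁ * L := by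
      intro z hz
      rw [mem_sphere_iff_norm] at hz
      have hre_diff : |z.re - σ| ≤ r := by
        have h1 : |(z - (σ:ℂ)).re| ≤ ‖z - (σ:ℂ)‖ := by
          exact Complex.abs_re_le_norm _
        rw [Complex.sub_re, Complex.ofReal_re] at h1
        rw [← hz]; exact h1
      have hzre_lb : 1 - (1 + a) / L < z.re := by
        have h2 : σ - r ≤ z.re := by
          have := abs_le.mp hre_diff
          linarith [this.1]
        have h3 : 1 - 1 / L - a / L < σ - r := by
          rw [hr_def]; linarith
        have : 1 - (1 + a) / L = 1 - 1 / L - a / L := by ring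
        linarith
      have hzre_σ₀ : σ₀ ≤ z.re := by
        have h4 : (1 + a) / L ≤ (1 + a) / Real.log 3 :=
          div_le_div_of_nonneg_left (by linarith) (by linarith) hL3
        rw [hσ₀_def]
        linarith
      have hzre_pos : 0 < z.re := lt_of_lt_of_le hσ₀ hzre_σ₀
      have hqE : (q : ℝ) ^ (1 - z.re) ≤ E := by
        have hqpos : (0:ℝ) < q := by positivity
        rw [Real.rpow_def_of_pos hqpos, hE_def]
        apply Real.exp_le_exp.mpr
        have h5 : 1 - z.re ≤ (1 + a) / L := by linarith
        calc Real.log q * (1 - z.re) = (1 - z.re) * L := by rw [hL_def]; ring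
          _ ≤ (1 + a) / L * L := mul_le_mul_of_nonneg_right h5 hLpos.le
          _ = 1 + a := by field_simp
      have hz2 : ‖z‖ ≤ 2 := by
        have h6 : ‖z‖ ≤ ‖(σ:ℂ)‖ + ‖z - σ‖ := by
          calc ‖z‖ = ‖(σ:ℂ) + (z - σ)‖ := by ring_nf
            _ ≤ ‖(σ:ℂ)‖ + ‖z - σ‖ := norm_add_le _ _
        have h7 : ‖(σ:ℂ)‖ = |σ| := Complex.norm_real σ
        have h8 : |σ| ≤ 1 := abs_le.mpr ⟨by linarith, hσ1⟩
        have h9 : r ≤ 1 := by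
          rw [hr_def, div_le_one hLpos]; linarith
        rw [hz] at h6
        rw [h7] at h6
        linarith
      rw [LFunction_eq_FF hq3 hχ hzre_pos]
      calc ‖FF χ z‖ ≤ 2 * E * (1 + Real.log q) + 2 * E / z.re :=
            FF_bound hq3 hχ hE1 hzre_pos hqE hz2
        _ ≤ 2 * E * (2 * L) + (2 * E / σ₀) * L := by
            have h10 : 1 + Real.log q ≤ 2 * L := by rw [← hL_def]; linarith
            have h11 : 2 * E / z.re ≤ 2 * E / σ₀ :=
              div_le_div_of_nonneg_left (by positivity) hσ₀ hzre_σ₀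
            have h12 : 2 * E / σ₀ ≤ (2 * E / σ₀) * L := le_mul_of_one_le_right (by positivity) hL1.le
            have h13 : 0 ≤ 2 * E := by positivity
            nlinarith
        _ = K₁ * L := by rw [hK₁_def]; ring
    have hd : DiffContOnCl ℂ (LFunction χ) (Metric.ball (σ : ℂ) r) :=
      (differentiable_LFunction hχ).diffContOnCl
    have := Complex.norm_deriv_le_of_forall_mem_sphere_norm_le hrpos hd hbound
    calc ‖deriv (LFunction χ) σ‖ ≤ K₁ * L / r := this
      _ = K₁ / a * L ^ 2 := by rw [hr_def]; field_simp
  -- mean value theorem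
  set f : ℝ → ℂ := fun t => LFunction χ (t : ℂ) with hf_def
  have hfd : ∀ t ∈ Set.Icc β 1, HasDerivWithinAt f (deriv (LFunction χ) (t : ℂ)) (Set.Icc β 1) t :=
    fun t _ => (((differentiable_LFunction hχ) (t : ℂ)).hasDerivAt.comp_ofReal).hasDerivWithinAt
  have hbd : ∀ t ∈ Set.Ico β 1, ‖deriv (LFunction χ) (t : ℂ)‖ ≤ K₁ / a * L ^ 2 :=
    fun t ht => hderiv t ht.1 ht.2.le
  have key := norm_image_sub_le_of_norm_deriv_le_segment' hfd hbd 1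
    (Set.right_mem_Icc.mpr hβ2.le)
  have hfβ : f β = 0 := hzero
  have hf1 : f 1 = LFunction χ 1 := by rw [hf_def]; norm_num
  rw [hfβ, sub_zero, hf1] at key
  calc (LFunction χ 1).re ≤ ‖LFunction χ 1‖ := by
        exact Complex.re_le_norm _
    _ ≤ K₁ / a * L ^ 2 * (1 - β) := key
    _ = K₁ / a * (1 - β) * L ^ 2 := by ring
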